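/- If a Snort position H is the disjoint union of two components G and G', where G' is isomorphic to G as a tinted graph except that some vertices of G' additionally carry a tint in the second player's colour (restricting only the first player's moves there), then H is a second-player win: the second player wins by copying each of the first player's moves in the opposite component. -/

import Mathlib

/-- A generalized Snort position: a simple graph, a partial colouring
(`some true` = blue = Left, `some false` = red = Right), and tints:
`tintB v` means `v` is reserved for Left (forbidden to Right), and
`tintR v` means `v` is reserved for Right (forbidden to Left). -/
structure TSnortPos (V : Type) where
  graph : SimpleGraph V
  color : V → Option Bool
  tintB : V → Prop
  tintR : V → Prop

/-- Left's legal moves: colour blue an uncolored, not red-tinted vertex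
having no red neighbour. -/
def TLeftMove {V : Type} (p q : TSnortPos V) : Prop :=
  q.graph = p.graph ∧ q.tintB = p.tintB ∧ q.tintR = p.tintR ∧
  ∃ v, p.color v = none ∧ ¬ p.tintR v ∧
    (∀ w, p.graph.Adj v w → p.color w ≠ some false) ∧
    q.color v = some true ∧ ∀ w, w ≠ v → q.color w = p.color w

/-- Right's legal moves: colour red an uncolored, not blue-tinted vertex
having no blue neighbour. -/
def TRightMove {V : Type} (p q : TSnortPos V) : Prop :=
  q.graph = p.graph ∧ q.tintB = p.tintB ∧ q.tintR = p.tintR ∧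
  ∃ v, p.color v = none ∧ ¬ p.tintB v ∧
    (∀ w, p.graph.Adj v w → p.color w ≠ some true) ∧
    q.color v = some false ∧ ∀ w, w ≠ v → q.color w = p.color w

mutual
  inductive TLeftWinsFirst {V : Type} : TSnortPos V → Prop
    | intro (p q : TSnortPos V) (h : TLeftMove p q) (hq : TLeftWinsSecond q) :
        TLeftWinsFirst p
  inductive TLeftWinsSecond {V : Type} : TSnortPos V → Prop
    | intro (p : TSnortPos V) (h : ∀ q, TRightMove p q → TLeftWinsFirst q) :
        TLeftWinsSecond p
end

mutual
  inductive TRightWinsFirst {V : Type} : TSnortPos V → Prop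
    | intro (p q : TSnortPos V) (h : TRightMove p q) (hq : TRightWinsSecond q) :
        TRightWinsFirst p
  inductive TRightWinsSecond {V : Type} : TSnortPos V → Prop
    | intro (p : TSnortPos V) (h : ∀ q, TLeftMove p q → TRightWinsFirst q) :
        TRightWinsSecond p
end

/-- The disjoint union of two copies of a graph `G`. -/
def doubleGraph {V : Type} (G : SimpleGraph V) : SimpleGraph (V ⊕ V) where
  Adj := fun a b =>
    match a, b with
    | Sum.inl a, Sum.inl b => G.Adj a b
    | Sum.inr a, Sum.inr b => G.Adj a b
    | _, _ => False
  symm := by constructor; rintro (a | a) (b | b) h <;> simp_all <;> exact G.adj_symm h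
  loopless := by constructor; rintro (a | a) h <;> simp_all

/-!
Left, moving second, answers a Right move at `v` by colouring its mirror image `v.swap` blue.
This keeps the colouring of the second copy the colour-flipped mirror image of the first, and
then the answer is always legal: Left is never tinted out, `v.swap` is uncoloured because `v`
was, and a red neighbour of `v.swap` would mirror a blue neighbour of `v`. The extra blue tints
only remove options of Right and play no role. Every move colours a vertex, so the play ends,
and Right's half follows by exchanging the roles of the two players.
-/

section

variable {V : Type}

namespace TSnortPos

def dual (p : TSnortPos V) : TSnortPos V :=
  ⟨p.graph, fun v => (p.color v).map not, p.tintR, p.tintB⟩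

@[simp]
theorem dual_dual (p : TSnortPos V) : p.dual.dual = p := by
  cases p
  simp [dual, Option.map_map, Function.comp_def]

def uncolored (p : TSnortPos V) : Set V := {v | p.color v = none}

end TSnortPos

open TSnortPos Function

theorem Option.map_not_eq_some_iff {o : Option Bool} {b : Bool} :
    o.map not = some b ↔ o = some !b := by
  simp only [Option.map_eq_some_iff, Bool.not_eq_eq_eq_not, exists_eq_right]

theorem tLeftMove_dual_iff {p q : TSnortPos V} : TLeftMove p.dual q.dual ↔ TRightMove p q := by
  simp only [TLeftMove, TRightMove, dual, Option.map_eq_none_iff, ne_eq,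
    Option.map_not_eq_some_iff, Bool.not_false, Bool.not_true, (Option.map_injective Bool.not_injective).eq_iff]
  tauto

theorem tRightMove_dual_iff {p q : TSnortPos V} : TRightMove p.dual q.dual ↔ TLeftMove p q := by
  rw [← tLeftMove_dual_iff, dual_dual, dual_dual]

mutual

theorem TLeftWinsFirst.dual {p : TSnortPos V} : TLeftWinsFirst p → TRightWinsFirst p.dual
  | .intro _ q h hq => .intro _ q.dual (tRightMove_dual_iff.2 h) hq.dual

theorem TLeftWinsSecond.dual {p : TSnortPos V} : TLeftWinsSecond p → TRightWinsSecond p.dual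
  | .intro _ h => .intro _ fun q hq => by
      rw [← dual_dual q] at hq ⊢
      exact (h q.dual (tLeftMove_dual_iff.1 hq)).dual

end

theorem uncolored_ssubset_of_recolor {c c' : V → Option Bool} {v : V} {b : Bool}
    (hv : c v = none) (hv' : c' v = some b) (hc : ∀ w, w ≠ v → c' w = c w) :
    {w | c' w = none} ⊂ {w | c w = none} := by
  refine Set.ssubset_iff_subset_ne.2 ⟨fun w hw => ?_, fun h => ?_⟩
  · rcases eq_or_ne w v with rfl | hwv
    · simp_all
    · simpa [hc w hwv] using hw
  · simpa [hv'] using h.symm.subset hv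

theorem TLeftMove.uncolored_ssubset {p q : TSnortPos V} (h : TLeftMove p q) :
    q.uncolored ⊂ p.uncolored :=
  let ⟨_, _, _, _, hv, _, _, hqv, hqw⟩ := h
  uncolored_ssubset_of_recolor hv hqv hqw

theorem TRightMove.uncolored_ssubset {p q : TSnortPos V} (h : TRightMove p q) :
    q.uncolored ⊂ p.uncolored :=
  let ⟨_, _, _, _, hv, _, _, hqv, hqw⟩ := h
  uncolored_ssubset_of_recolor hv hqv hqw

theorem TLeftWinsSecond.of_invariant [Finite V] (S : TSnortPos V → Prop)
    (hS : ∀ p q, S p → TRightMove p q → ∃ r, TLeftMove q r ∧ S r) (p : TSnortPos V) (hp : S p) :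
    TLeftWinsSecond p := by
  refine .intro p fun q hq => ?_
  obtain ⟨r, hr, hSr⟩ := hS p q hp hq
  exact .intro q r hr (of_invariant S hS r hSr)
termination_by p.uncolored.ncard
decreasing_by exact Set.ncard_lt_ncard (hr.uncolored_ssubset.trans hq.uncolored_ssubset)

theorem tLeftMove_update [DecidableEq V] {p : TSnortPos V} {v : V} (hv : p.color v = none)
    (ht : ¬ p.tintR v) (hadj : ∀ w, p.graph.Adj v w → p.color w ≠ some false) :
    TLeftMove p { p with color := update p.color v (some true) } :=
  ⟨rfl, rfl, rfl, v, hv, ht, hadj, update_self .., fun _ hw => update_of_ne hw ..⟩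

theorem TRightMove.exists_eq_update [DecidableEq V] {p q : TSnortPos V} (h : TRightMove p q) :
    ∃ v, p.color v = none ∧ ¬ p.tintB v ∧ (∀ w, p.graph.Adj v w → p.color w ≠ some true) ∧
      q = { p with color := update p.color v (some false) } := by
  obtain ⟨hg, hb, hr, v, hv, ht, hadj, hqv, hqw⟩ := h
  refine ⟨v, hv, ht, hadj, ?_⟩
  cases p; cases q
  dsimp only at hg hb hr hqv hqw ⊢
  subst hg hb hr
  congr
  funext w
  rcases eq_or_ne w v with rfl | hwv
  · rw [hqv, update_self]
  · rw [hqw w hwv, update_of_ne hwv]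

theorem Sum.swap_ne_self (x : V ⊕ V) : x.swap ≠ x := by
  cases x <;> simp

def IsMirrorColoring (c : V ⊕ V → Option Bool) : Prop :=
  ∀ x, c x.swap = (c x).map not

theorem IsMirrorColoring.update_update [DecidableEq V] {c : V ⊕ V → Option Bool}
    (hc : IsMirrorColoring c) (v : V ⊕ V) (b : Bool) :
    IsMirrorColoring (update (update c v (some b)) v.swap (some !b)) := by
  have hv : v.swap ≠ v := Sum.swap_ne_self v
  intro x
  rcases eq_or_ne x v with rfl | hxv
  · simp [update_of_ne hv.symm]
  rcases eq_or_ne x v.swap with rfl | hxv'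
  · simp [update_of_ne hv.symm]
  have hsv : x.swap ≠ v := fun h => hxv' (by rw [← h, Sum.swap_swap])
  have hsv' : x.swap ≠ v.swap := fun h => hxv (Sum.swap_leftInverse.injective h)
  simp only [update_of_ne hsv, update_of_ne hsv', update_of_ne hxv, update_of_ne hxv', hc x]

theorem doubleGraph_adj_swap (G : SimpleGraph V) {a b : V ⊕ V} :
    (doubleGraph G).Adj a.swap b.swap ↔ (doubleGraph G).Adj a b := by
  cases a <;> cases b <;> rfl

theorem doubleGraph_not_adj_swap (G : SimpleGraph V) (a : V ⊕ V) :
    ¬ (doubleGraph G).Adj a a.swap := by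
  cases a <;> exact id

structure IsCopycatPos (G : SimpleGraph V) (p : TSnortPos (V ⊕ V)) : Prop where
  graph_eq : p.graph = doubleGraph G
  not_tintR : ∀ x, ¬ p.tintR x
  mirror : IsMirrorColoring p.color

theorem IsCopycatPos.exists_tLeftMove [DecidableEq V] {G : SimpleGraph V}
    {p q : TSnortPos (V ⊕ V)} (hp : IsCopycatPos G p) (hq : TRightMove p q) :
    ∃ r, TLeftMove q r ∧ IsCopycatPos G r := by
  obtain ⟨v, hv, -, hadj, rfl⟩ := hq.exists_eq_update
  have hv' : v.swap ≠ v := Sum.swap_ne_self v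
  refine ⟨_, tLeftMove_update ?_ (hp.not_tintR v.swap) fun w hw => ?_,
    hp.graph_eq, hp.not_tintR, hp.mirror.update_update v false⟩
  · dsimp only
    rw [update_of_ne hv', hp.mirror v, hv, Option.map_none]
  · rw [hp.graph_eq] at hadj hw
    have hwv : w ≠ v := by
      rintro rfl
      exact doubleGraph_not_adj_swap G w hw.symm
    have hmirror : p.color w = (p.color w.swap).map not := by
      rw [← hp.mirror w.swap, Sum.swap_swap]
    have hblue : p.color w.swap ≠ some true :=
      hadj w.swap ((doubleGraph_adj_swap G).1 (by rwa [Sum.swap_swap]))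
    dsimp only
    rwa [update_of_ne hwv, hmirror, ne_eq, Option.map_not_eq_some_iff]

end

/-- Copycat proposition for Snort (Proposition `thm:symmetry`): if a position
`H` is a disjoint union of `G` and `G'`, where `G'` is isomorphic to `G`
except that some vertices of `G'` carry an additional tint in the second
player's colour, then `H` is a second-player win (the second player copies
each move of the first player in the other component). -/
theorem snort_copycat_tinted {V : Type} [Fintype V] (G : SimpleGraph V)
    (T : V → Prop) :
    -- if the extra tints on the second copy are blue (restricting Right, the
    -- first player), then Left wins moving second:
    TLeftWinsSecond
      ⟨doubleGraph G, fun _ => none,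
        Sum.elim (fun _ => False) T, fun _ => False⟩ ∧
    -- symmetrically, with extra red tints Right wins moving second:
    TRightWinsSecond
      ⟨doubleGraph G, fun _ => none,
        fun _ => False, Sum.elim (fun _ => False) T⟩ := by
  classical
  have hLeft : TLeftWinsSecond (⟨doubleGraph G, fun _ => none,
      Sum.elim (fun _ => False) T, fun _ => False⟩ : TSnortPos (V ⊕ V)) :=
    TLeftWinsSecond.of_invariant (IsCopycatPos G) (fun _ _ => IsCopycatPos.exists_tLeftMove) _
      ⟨rfl, fun _ => id, fun _ => rfl⟩
  exact ⟨hLeft, hLeft.dual⟩
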